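/- arXiv:2001.00181 — 2 statements merged into one kernel-verified Lean document; each statement's English description precedes it below -/
import Mathlib

section
/- For all n ≥ 3 and d ≥ 3, the windmill graph W_n^d, obtained by joining d copies of the complete graph K_n at a single shared common vertex, is not Schur positive. -/
open Finset MvPolynomial

/-- The chromatic symmetric function of `G`, realized in `N` variables. -/
noncomputable def csf {V : Type} [Fintype V] (G : SimpleGraph V) (N : ℕ) :
    MvPolynomial (Fin N) ℤ := by
  classical
  exact ∑ κ ∈ Finset.univ.filter
      (fun κ : V → Fin N => ∀ u v : V, G.Adj u v → κ u ≠ κ v),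
    ∏ v : V, X (κ v)

/-- A semistandard filling of the Young diagram `D` with entries in `Fin N`:
rows weakly increase (left to right) and columns strictly increase (top to bottom). -/
def IsSSYTof (D : YoungDiagram) (N : ℕ) (T : D.cells → Fin N) : Prop :=
  (∀ c d : D.cells, (c : ℕ × ℕ).1 = (d : ℕ × ℕ).1 → (c : ℕ × ℕ).2 ≤ (d : ℕ × ℕ).2 →
      T c ≤ T d) ∧
  (∀ c d : D.cells, (c : ℕ × ℕ).2 = (d : ℕ × ℕ).2 → (c : ℕ × ℕ).1 < (d : ℕ × ℕ).1 →
      T c < T d)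

/-- The Schur polynomial of shape `D` in `N` variables, as the sum of content
monomials over all semistandard Young tableaux of shape `D` with entries in `Fin N`. -/
noncomputable def schurShape (N : ℕ) (D : YoungDiagram) : MvPolynomial (Fin N) ℤ := by
  classical
  exact ∑ T ∈ Finset.univ.filter (fun T : D.cells → Fin N => IsSSYTof D N T),
    ∏ c : D.cells, X (T c)

/-- The Young diagram of a partition. -/
def diagramOf {n : ℕ} (μ : n.Partition) : YoungDiagram :=
  YoungDiagram.ofRowLens (μ.parts.sort (· ≥ ·)) (μ.parts.pairwise_sort (· ≥ ·)).sortedGE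

/-- The Schur polynomial `s_μ` in `N` variables. -/
noncomputable def schur (N : ℕ) {n : ℕ} (μ : n.Partition) : MvPolynomial (Fin N) ℤ :=
  schurShape N (diagramOf μ)

/-- A graph is Schur positive if its chromatic symmetric function, realized in any
number `N ≥ |V(G)|` of variables, is a nonnegative linear combination of the Schur
polynomials `s_λ`, `λ ⊢ |V(G)|`. -/
def SchurPositive {V : Type} [Fintype V] (G : SimpleGraph V) : Prop :=
  ∀ N : ℕ, Fintype.card V ≤ N →
    ∃ c : (Fintype.card V).Partition → ℤ,
      (∀ μ, 0 ≤ c μ) ∧ csf G N = ∑ μ, c μ • schur N μ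

/-- A graph is e-positive if its chromatic symmetric function, realized in any
number `N ≥ |V(G)|` of variables, is a nonnegative linear combination of the
polynomials `e_λ`, `λ ⊢ |V(G)|`. -/
def EPositive {V : Type} [Fintype V] (G : SimpleGraph V) : Prop :=
  ∀ N : ℕ, Fintype.card V ≤ N →
    ∃ c : (Fintype.card V).Partition → ℤ,
      (∀ μ, 0 ≤ c μ) ∧ csf G N = ∑ μ, c μ • esymmPart (Fin N) ℤ μ

/-- A stable (independent) set of vertices. -/
def IsStableSet {V : Type} (G : SimpleGraph V) (b : Finset V) : Prop :=
  ∀ u ∈ b, ∀ v ∈ b, ¬ G.Adj u v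

/-- A stable partition of `G`: a set partition of the vertex set all of whose
blocks are stable. -/
def IsStablePartition {V : Type} [Fintype V] [DecidableEq V] (G : SimpleGraph V)
    (P : Finpartition (Finset.univ : Finset V)) : Prop :=
  ∀ b ∈ P.parts, IsStableSet G b

/-- The type of a set partition: the multiset of its block sizes. -/
def typeOf {V : Type} [Fintype V] [DecidableEq V]
    (P : Finpartition (Finset.univ : Finset V)) : Multiset ℕ :=
  P.parts.val.map Finset.card
/-- The windmill graph `W_n^d`: a central vertex `none` together with `d` disjoint
blocks of `n − 1` vertices each; the centre together with each block induces a
complete graph `K_n`, and there are no edges between distinct blocks. -/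
def windmill (n d : ℕ) : SimpleGraph (Option (Fin d × Fin (n - 1))) :=
  SimpleGraph.fromRel fun a b =>
    a = none ∨ ∃ (i : Fin d) (u v : Fin (n - 1)), a = some (i, u) ∧ b = some (i, v)


/-!
Suppose `X_G = ∑ c_λ s_λ` with `c_λ ≥ 0` for `G = W_n^d`. Colouring the centre `n - 1` and the
`k`-th vertex of every blade `k` is proper and has content `β = (d, …, d, 1)`, so some `s_λ` with
`c_λ > 0` has a semistandard tableau `T` of content `β`. In `T` the largest entry `n - 1` occurs
once, so among the (at least two) cells holding `n - 2` one has no `n - 1` below it; raising the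
rightmost such cell to `n - 1` keeps `T` semistandard and gives content `α = (d, …, d, d - 1, 2)`.
Hence `[x^α] X_G > 0`. But the centre is adjacent to every other vertex, so its colour occurs
exactly once in any proper colouring, whereas no entry of `α` equals `1` since `d ≥ 3`.
-/

section Content

variable {ι σ : Type*} [Fintype ι]

noncomputable def content (f : ι → σ) : σ →₀ ℕ := ∑ i, Finsupp.single (f i) 1

lemma content_apply [DecidableEq σ] (f : ι → σ) (j : σ) : content f j = #{i | f i = j} := by
  simp [content, Finsupp.finsetSum_apply, Finsupp.single_apply]

lemma content_update_add [DecidableEq ι] (f : ι → σ) (i : ι) (b : σ) :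
    content (Function.update f i b) + Finsupp.single (f i) 1 = content f + Finsupp.single b 1 := by
  simp only [content]
  rw [← Finset.add_sum_erase _ _ (mem_univ i), ← Finset.add_sum_erase _ _ (mem_univ i)]
  rw [Finset.sum_congr rfl fun k hk => by rw [Function.update_of_ne (ne_of_mem_erase hk)]]
  simp only [Function.update_self]
  abel

lemma prod_X_eq_monomial_content {R : Type*} [CommSemiring R] (f : ι → σ) :
    ∏ i, (X (f i) : MvPolynomial σ R) = monomial (content f) 1 :=
  (monomial_sum_one _ _).symm

lemma coeff_sum_prod_X [DecidableEq σ] (s : Finset (ι → σ)) (γ : σ →₀ ℕ) :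
    coeff γ (∑ f ∈ s, ∏ i, (X (f i) : MvPolynomial σ ℤ)) = #{f ∈ s | content f = γ} := by
  simp [coeff_sum, prod_X_eq_monomial_content, coeff_monomial]

end Content

lemma coeff_csf_pos_iff {V : Type} [Fintype V] {G : SimpleGraph V} {N : ℕ} {γ : Fin N →₀ ℕ} :
    0 < coeff γ (csf G N) ↔
      ∃ κ : V → Fin N, (∀ u v, G.Adj u v → κ u ≠ κ v) ∧ content κ = γ := by
  classical
  simp only [csf, coeff_sum_prod_X, Nat.cast_pos, Finset.card_pos, Finset.filter_nonempty_iff,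
    Finset.mem_filter, Finset.mem_univ, true_and]

lemma coeff_schurShape {N : ℕ} {D : YoungDiagram} [DecidablePred (IsSSYTof D N)]
    (γ : Fin N →₀ ℕ) :
    coeff γ (schurShape N D) = #{T | IsSSYTof D N T ∧ content T = γ} := by
  classical
  simp only [schurShape, coeff_sum_prod_X, Finset.filter_filter]
  congr

lemma coeff_schur_nonneg {n : ℕ} (N : ℕ) (μ : n.Partition) (γ : Fin N →₀ ℕ) :
    0 ≤ coeff γ (schur N μ) := by
  classical
  rw [schur, coeff_schurShape]
  positivity

lemma coeff_schurShape_pos_iff {N : ℕ} {D : YoungDiagram} {γ : Fin N →₀ ℕ} :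
    0 < coeff γ (schurShape N D) ↔ ∃ T, IsSSYTof D N T ∧ content T = γ := by
  classical
  simp [coeff_schurShape, Finset.filter_nonempty_iff]

lemma coeff_sum_smul_pos_iff {ι σ : Type*} [Fintype ι] {c : ι → ℤ}
    {p : ι → MvPolynomial σ ℤ} {γ : σ →₀ ℕ} (hc : ∀ i, 0 ≤ c i) (hp : ∀ i, 0 ≤ coeff γ (p i)) :
    0 < coeff γ (∑ i, c i • p i) ↔ ∃ i, 0 < c i ∧ 0 < coeff γ (p i) := by
  simp only [coeff_sum, coeff_smul, smul_eq_mul]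
  rw [Finset.sum_pos_iff_of_nonneg fun i _ => mul_nonneg (hc i) (hp i)]
  simp only [Finset.mem_univ, true_and]
  refine exists_congr fun i => ⟨fun h => ⟨(hc i).lt_of_ne ?_, (hp i).lt_of_ne ?_⟩,
    fun h => mul_pos h.1 h.2⟩ <;> rintro h₀ <;> simp [← h₀] at h

section Tableau

variable {N : ℕ} {D : YoungDiagram} {T : D.cells → Fin N} {u w : Fin N}

lemma IsSSYTof.update (hT : IsSSYTof D N T) (huw : u < w) (hcover : ∀ c, u < T c → T c = w)
    {c₀ : D.cells} (hc₀ : T c₀ = u)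
    (hrow : ∀ e : D.cells, (e : ℕ × ℕ).1 = (c₀ : ℕ × ℕ).1 → (c₀ : ℕ × ℕ).2 < (e : ℕ × ℕ).2 →
      T e ≠ u)
    (hcol : ∀ e : D.cells, (e : ℕ × ℕ).2 = (c₀ : ℕ × ℕ).2 → (c₀ : ℕ × ℕ).1 < (e : ℕ × ℕ).1 →
      T e ≠ w) :
    IsSSYTof D N (Function.update T c₀ w) := by
  classical
  constructor
  · intro a b hr hc
    rcases eq_or_ne b c₀ with rfl | hb
    · rw [Function.update_self]
      rcases eq_or_ne a b with rfl | ha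
      · rw [Function.update_self]
      · rw [Function.update_of_ne ha]
        exact (hc₀ ▸ hT.1 a b hr hc).trans huw.le
    · rw [Function.update_of_ne hb]
      rcases eq_or_ne a c₀ with rfl | ha
      · rw [Function.update_self]
        have hlt : (a : ℕ × ℕ).2 < (b : ℕ × ℕ).2 :=
          hc.lt_of_ne fun h => hb (Subtype.ext (Prod.ext hr.symm h.symm))
        exact (hcover b ((hc₀ ▸ hT.1 a b hr hc).lt_of_ne (hrow b hr.symm hlt).symm)).ge
      · rw [Function.update_of_ne ha]
        exact hT.1 a b hr hc
  · intro a b hc hr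
    rcases eq_or_ne a c₀ with rfl | ha
    · exact absurd (hcover b (hc₀ ▸ hT.2 a b hc hr)) (hcol b hc.symm hr)
    rw [Function.update_of_ne ha]
    rcases eq_or_ne b c₀ with rfl | hb
    · rw [Function.update_self]
      exact (hc₀ ▸ hT.2 a b hc hr).trans huw
    · rw [Function.update_of_ne hb]
      exact hT.2 a b hc hr

lemma IsSSYTof.exists_update (hT : IsSSYTof D N T) (huw : u < w)
    (hcover : ∀ c, u < T c → T c = w) (hw : ∀ c c', T c = w → T c' = w → c = c')
    (hu : ∃ a b, a ≠ b ∧ T a = u ∧ T b = u) :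
    ∃ c, T c = u ∧ IsSSYTof D N (Function.update T c w) := by
  classical
  have hcol_inj : ∀ a b, T a = u → T b = u → (a : ℕ × ℕ).2 = (b : ℕ × ℕ).2 → a = b := by
    intro a b ha hb h
    rcases lt_trichotomy (a : ℕ × ℕ).1 (b : ℕ × ℕ).1 with hab | hab | hab
    · exact absurd (hT.2 a b h hab) (by rw [ha, hb]; exact lt_irrefl u)
    · exact Subtype.ext (Prod.ext hab h)
    · exact absurd (hT.2 b a h.symm hab) (by rw [ha, hb]; exact lt_irrefl u)
  let HasWBelow (c : D.cells) : Prop := ∃ e : D.cells,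
    (e : ℕ × ℕ).2 = (c : ℕ × ℕ).2 ∧ (c : ℕ × ℕ).1 < (e : ℕ × ℕ).1 ∧ T e = w
  have hfree : ({c | T c = u ∧ ¬ HasWBelow c} : Finset D.cells).Nonempty := by
    obtain ⟨a, b, hab, ha, hb⟩ := hu
    by_contra! h
    simp only [Finset.filter_eq_empty_iff, Finset.mem_univ, true_implies, not_and, not_not] at h
    obtain ⟨ea, hea, -, hwa⟩ := h ha
    obtain ⟨eb, heb, -, hwb⟩ := h hb
    exact hab (hcol_inj a b ha hb (by rw [← hea, ← heb, hw ea eb hwa hwb]))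
  obtain ⟨c₁, hc₁mem, hmax⟩ := Finset.exists_max_image _ (fun c : D.cells => (c : ℕ × ℕ).2) hfree
  obtain ⟨hc₁, hc₁free⟩ : T c₁ = u ∧ ¬ HasWBelow c₁ := by simpa using hc₁mem
  refine ⟨c₁, hc₁, hT.update huw hcover hc₁ ?_ fun e he hlt hew => hc₁free ⟨e, he, hlt, hew⟩⟩
  intro e hrow hlt heu
  obtain ⟨cw, hcw, hlt', hcww⟩ : HasWBelow e := by
    by_contra h
    exact absurd (hmax e (by simp [heu, h])) (not_le.2 hlt)
  -- the cell in the row of `cw` and the column of `c₁` lies strictly below `c₁`, so it holds `w`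
  have hp : ((cw : ℕ × ℕ).1, (c₁ : ℕ × ℕ).2) ∈ D :=
    D.up_left_mem (j2 := (cw : ℕ × ℕ).2) le_rfl (by omega) ((YoungDiagram.mem_cells _).1 cw.2)
  have hpw : T ⟨_, (YoungDiagram.mem_cells _).2 hp⟩ = w :=
    hcover _ (hc₁ ▸ hT.2 c₁ _ rfl (by simp only; omega))
  have := congrArg (fun x : D.cells => (x : ℕ × ℕ).2) (hw _ _ hpw hcww)
  simp only at this
  omega

end Tableau

lemma coeff_schurShape_pos_of_move {N : ℕ} {D : YoungDiagram} {α β : Fin N →₀ ℕ} {u w : Fin N}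
    (huw : u < w) (hcover : ∀ j, u < j → j ≠ w → β j = 0) (hw : β w ≤ 1) (hu : 2 ≤ β u)
    (hα : α + Finsupp.single u 1 = β + Finsupp.single w 1)
    (hβ : 0 < coeff β (schurShape N D)) : 0 < coeff α (schurShape N D) := by
  classical
  obtain ⟨T, hT, rfl⟩ := coeff_schurShape_pos_iff.1 hβ
  rw [content_apply] at hw hu
  have hTcover : ∀ c, u < T c → T c = w := by
    intro c hc
    by_contra h
    have := hcover _ hc h
    rw [content_apply, Finset.card_eq_zero, Finset.filter_eq_empty_iff] at this
    exact this (Finset.mem_univ c) rfl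
  have hTw : ∀ c c', T c = w → T c' = w → c = c' := fun c c' hc hc' =>
    Finset.card_le_one.1 hw c (by simp [hc]) c' (by simp [hc'])
  have hTu : ∃ a b, a ≠ b ∧ T a = u ∧ T b = u := by
    obtain ⟨a, ha, b, hb, hab⟩ := Finset.one_lt_card.1 hu
    exact ⟨a, b, hab, by simpa using ha, by simpa using hb⟩
  obtain ⟨c, hc, hT'⟩ := hT.exists_update huw hTcover hTw hTu
  refine coeff_schurShape_pos_iff.2 ⟨_, hT', add_right_cancel (b := Finsupp.single u 1) ?_⟩
  rw [hα, ← hc, content_update_add]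

lemma content_apply_eq_one_of_forall_adj {V σ : Type*} [Fintype V] {G : SimpleGraph V}
    {κ : V → σ} (hκ : ∀ u v, G.Adj u v → κ u ≠ κ v) {v₀ : V} (hv₀ : ∀ v ≠ v₀, G.Adj v₀ v) :
    content κ (κ v₀) = 1 := by
  classical
  rw [content_apply, Finset.card_eq_one]
  refine ⟨v₀, Finset.eq_singleton_iff_unique_mem.2 ⟨by simp, fun v hv => ?_⟩⟩
  by_contra h
  exact hκ v₀ v (hv₀ v h) (Finset.mem_filter.1 hv).2.symm

section Windmill

variable {n d N : ℕ}

lemma windmill_adj_none (v : Option (Fin d × Fin (n - 1))) (hv : v ≠ none) :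
    (windmill n d).Adj none v := by
  simpa [windmill] using hv.symm

lemma windmill_adj_some {p q : Fin d × Fin (n - 1)} (h : (windmill n d).Adj (some p) (some q)) :
    p.2 ≠ q.2 := by
  rw [windmill, SimpleGraph.fromRel_adj] at h
  grind

def windmillColoring (h : n - 1 < N) : Option (Fin d × Fin (n - 1)) → Fin N :=
  fun v => v.elim ⟨n - 1, h⟩ fun p => Fin.castLE h.le p.2

/-- The exponent `(d, …, d, d - 1, 2)`, obtained from the content of `windmillColoring` by
moving one unit from colour `n - 2` to colour `n - 1`. -/
noncomputable def windmillExponent (d : ℕ) (h : n - 1 < N) : Fin N →₀ ℕ :=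
  content (windmillColoring (d := d) h) + Finsupp.single ⟨n - 1, h⟩ 1 -
    Finsupp.single ⟨n - 2, by omega⟩ 1

variable (h : n - 1 < N)

lemma windmillColoring_proper (a b : Option (Fin d × Fin (n - 1))) (hab : (windmill n d).Adj a b) :
    windmillColoring h a ≠ windmillColoring h b := by
  have hsome (p : Fin d × Fin (n - 1)) :
      windmillColoring h (some p) ≠ windmillColoring (d := d) h none :=
    fun hp => (Fin.ext_iff.1 hp).not_lt (by simp [windmillColoring])
  rcases a with _ | p <;> rcases b with _ | q
  · exact absurd hab ((windmill n d).loopless.irrefl _)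
  · exact (hsome q).symm
  · exact hsome p
  · exact fun hpq => windmill_adj_some hab (Fin.castLE_injective h.le hpq)

lemma content_windmillColoring_apply (j : Fin N) :
    content (windmillColoring (d := d) h) j =
      if (j : ℕ) = n - 1 then 1 else if (j : ℕ) < n - 1 then d else 0 := by
  classical
  rw [content_apply, Finset.card_filter, Fintype.sum_option, Fintype.sum_prod_type]
  simp only [windmillColoring, Option.elim, Fin.ext_iff, Fin.val_castLE, Finset.sum_const,
    Finset.card_univ, Fintype.card_fin, Finset.sum_ite_eq', Finset.mem_range, smul_eq_mul,
    Fin.sum_univ_eq_sum_range (fun x => if x = (j : ℕ) then 1 else 0)]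
  split_ifs <;> omega

lemma windmillExponent_apply (j : Fin N) :
    windmillExponent d h j =
      (if (j : ℕ) = n - 1 then 1 else if (j : ℕ) < n - 1 then d else 0) +
        (if (j : ℕ) = n - 1 then 1 else 0) - (if (j : ℕ) = n - 2 then 1 else 0) := by
  simp [windmillExponent, content_windmillColoring_apply, Finsupp.single_apply, Fin.ext_iff,
    eq_comm]

lemma windmillExponent_apply_ne_one (hn : 2 ≤ n) (hd : 3 ≤ d) (j : Fin N) :
    windmillExponent d h j ≠ 1 := by
  rw [windmillExponent_apply]
  split_ifs <;> omega

lemma coeff_schurShape_windmillExponent_pos (hn : 2 ≤ n) (hd : 2 ≤ d) {D : YoungDiagram}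
    (hD : 0 < coeff (content (windmillColoring (d := d) h)) (schurShape N D)) :
    0 < coeff (windmillExponent d h) (schurShape N D) := by
  have hβ := content_windmillColoring_apply (d := d) h
  refine coeff_schurShape_pos_of_move (u := ⟨n - 2, by omega⟩) (w := ⟨n - 1, h⟩)
    (Fin.mk_lt_mk.2 (by omega)) ?_ (by simp [hβ]) ?_ ?_ hD
  · intro j huj hjw
    rw [hβ, if_neg (fun h => hjw (Fin.ext h)), if_neg (by simp [Fin.lt_def] at huj; omega)]
  · rw [hβ, if_neg (by simp; omega), if_pos (by simp; omega)]
    exact hd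
  · refine tsub_add_cancel_of_le (Finsupp.single_le_iff.2 ?_)
    rw [Finsupp.add_apply, hβ]
    split_ifs <;> simp_all <;> omega

end Windmill

/-- **Theorem.** For all `n ≥ 3` and `d ≥ 3`, the windmill graph `W_n^d` is not
Schur positive. -/
theorem windmill_not_schurPositive (n d : ℕ) (hn : 3 ≤ n) (hd : 3 ≤ d) :
    ¬ SchurPositive (windmill n d) := by
  intro hSP
  have hnN : n - 1 < Fintype.card (Option (Fin d × Fin (n - 1))) := by
    simp only [Fintype.card_option, Fintype.card_prod, Fintype.card_fin]
    nlinarith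
  obtain ⟨c, hc, hX⟩ := hSP _ le_rfl
  obtain ⟨μ, hcμ, hμβ⟩ := (coeff_sum_smul_pos_iff hc fun μ => coeff_schur_nonneg _ μ _).1
    (hX ▸ coeff_csf_pos_iff.2 ⟨_, windmillColoring_proper hnN, rfl⟩)
  have hμα := coeff_schurShape_windmillExponent_pos hnN (by omega) (by omega) hμβ
  obtain ⟨κ, hκ, hκα⟩ := coeff_csf_pos_iff.1
    (hX ▸ (coeff_sum_smul_pos_iff hc fun μ => coeff_schur_nonneg _ μ _).2 ⟨μ, hcμ, hμα⟩)
  apply windmillExponent_apply_ne_one hnN (by omega) hd (κ none)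
  rw [← hκα]
  exact content_apply_eq_one_of_forall_adj hκ windmill_adj_none
end

section
/- Let m ≥ 1 and n ≥ 2. The fan graph F_{m,n} has exactly one stable partition into three blocks, and the block sizes of this unique stable tripartition are m, ⌈n/2⌉ and ⌊n/2⌋. -/
open Finset MvPolynomial

/-- The fan graph `F_{m,n}`: the join of the edgeless graph on `m` vertices with the
path `P_n`; every one of the `m` independent vertices is adjacent to every vertex of
the path. -/
def fan (m n : ℕ) : SimpleGraph (Fin m ⊕ Fin n) :=
  SimpleGraph.fromRel fun a b =>
    (∃ (i : Fin m) (u : Fin n), a = Sum.inl i ∧ b = Sum.inr u) ∨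
    (∃ u v : Fin n, a = Sum.inr u ∧ b = Sum.inr v ∧ u.val + 1 = v.val)

/-!
Two consecutive path vertices and an apex vertex form a triangle, so the three blocks of a
stable tripartition of `F_{m,n}` are the colour classes of a proper 3-colouring normalised on
that triangle. Such a colouring is forced: every apex vertex avoids the two colours of the
path's first edge, and along the path the two remaining colours must alternate. The blocks are
therefore the apex vertices, the even and the odd path vertices.
-/

instance Setoid.decidableRelKer {α β : Type*} [DecidableEq β] (f : α → β) :
    DecidableRel (Setoid.ker f) :=
  inferInstanceAs (DecidableRel fun a b => f a = f b)

namespace Finpartition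

variable {α : Type*} [DecidableEq α] {s : Finset α}

theorem parts_eq_image_part (P : Finpartition s) : P.parts = s.image P.part := by
  ext t
  refine ⟨fun ht => ?_, fun ht => ?_⟩
  · obtain ⟨a, ha, rfl⟩ := P.part_surjOn ht
    exact mem_image_of_mem _ ha
  · obtain ⟨a, ha, rfl⟩ := mem_image.1 ht
    exact P.part_mem.2 ha

theorem ext_part {P Q : Finpartition s} (h : ∀ a, P.part a = Q.part a) : P = Q := by
  ext1
  rw [parts_eq_image_part, parts_eq_image_part, funext h]

variable [Fintype α] {β : Type*} [DecidableEq β]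

theorem part_ofSetoid_ker (f : α → β) (a : α) :
    (ofSetoid (Setoid.ker f)).part a = ({b | f b = f a} : Finset α) := by
  ext b
  rw [mem_part_ofSetoid_iff_rel, mem_filter]
  simp [eq_comm]

theorem eq_ofSetoid_ker {P : Finpartition (univ : Finset α)} (f : α → β)
    (h : ∀ a b, P.part a = P.part b ↔ f a = f b) : P = ofSetoid (Setoid.ker f) := by
  refine ext_part fun a => ?_
  ext b
  rw [part_ofSetoid_ker, mem_filter, P.mem_part_iff_part_eq_part (mem_univ b) (mem_univ a), h]
  simp

end Finpartition

section StablePartition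

variable {V : Type} [Fintype V] [DecidableEq V] {G : SimpleGraph V}
  {P : Finpartition (univ : Finset V)}

theorem typeOf_ofSetoid_ker {β : Type*} [Fintype β] [DecidableEq β] {f : V → β}
    (hf : Function.Surjective f) :
    typeOf (Finpartition.ofSetoid (Setoid.ker f)) = univ.val.map fun k => #{x | f x = k} := by
  have hfiber : Function.Injective fun k => ({a | f a = k} : Finset V) := by
    intro k l hkl
    obtain ⟨a, rfl⟩ := hf k
    simpa using (Finset.ext_iff.1 hkl a).1 (by simp)
  have hparts : (Finpartition.ofSetoid (Setoid.ker f)).parts =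
      univ.image fun k => ({a | f a = k} : Finset V) := by
    rw [Finpartition.parts_eq_image_part, funext (Finpartition.part_ofSetoid_ker f),
      ← image_univ_of_surjective hf, image_image]
    rfl
  rw [typeOf, hparts, image_val_of_injOn hfiber.injOn, Multiset.map_map]
  rfl

def IsStablePartition.partColoring (hP : IsStablePartition G P) : G.Coloring P.parts :=
  .mk (fun x => ⟨P.part x, P.part_mem.2 (mem_univ x)⟩) fun {x y} hxy hpart => by
    have hxy' : P.part x = P.part y := congrArg Subtype.val hpart
    exact hP _ (P.part_mem.2 (mem_univ y)) x (hxy' ▸ P.mem_part (mem_univ x)) y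
      (P.mem_part (mem_univ y)) hxy

theorem IsStablePartition.partColoring_eq_iff (hP : IsStablePartition G P) {x y : V} :
    hP.partColoring x = hP.partColoring y ↔ P.part x = P.part y :=
  Subtype.ext_iff

theorem IsStablePartition.exists_coloring {ι : Type} [Fintype ι] (hP : IsStablePartition G P)
    (hcard : #P.parts = Fintype.card ι) (r : ι → V) (hr : Pairwise fun i j => G.Adj (r i) (r j)) :
    ∃ C : G.Coloring ι, (∀ i, C (r i) = i) ∧ ∀ x y, P.part x = P.part y ↔ C x = C y := by
  have hbij : Function.Bijective (hP.partColoring ∘ r) :=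
    (Fintype.bijective_iff_injective_and_card _).2
      ⟨hP.partColoring.injective_comp_of_pairwise_adj r hr, by rw [Fintype.card_coe, hcard]⟩
  set E := Equiv.ofBijective _ hbij
  refine ⟨G.recolorOfEquiv E.symm hP.partColoring, E.symm_apply_apply, fun x y => ?_⟩
  rw [← hP.partColoring_eq_iff]
  exact E.symm.injective.eq_iff.symm

theorem isStablePartition_ofSetoid_ker {α : Type*} [DecidableEq α] (C : G.Coloring α) :
    IsStablePartition G (Finpartition.ofSetoid (Setoid.ker C)) := by
  intro b hb x hx y hy hxy
  rw [Finpartition.parts_eq_image_part] at hb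
  obtain ⟨a, -, rfl⟩ := mem_image.1 hb
  rw [Finpartition.part_ofSetoid_ker, mem_filter] at hx hy
  exact C.valid hxy (hx.2.trans hy.2.symm)

end StablePartition

section Fan

variable {m n : ℕ}

open Sum

@[simp] theorem fan_adj_inl_inl (i j : Fin m) : ¬ (fan m n).Adj (inl i) (inl j) := by
  simp [fan]

@[simp] theorem fan_adj_inl_inr (i : Fin m) (u : Fin n) : (fan m n).Adj (inl i) (inr u) := by
  simp [fan]

@[simp] theorem fan_adj_inr_inl (u : Fin n) (i : Fin m) : (fan m n).Adj (inr u) (inl i) := by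
  simp [fan]

@[simp] theorem fan_adj_inr_inr (u v : Fin n) :
    (fan m n).Adj (inr u) (inr v) ↔ u.val + 1 = v.val ∨ v.val + 1 = u.val := by
  grind [fan, SimpleGraph.fromRel_adj]

variable (m n) in
def fanColoring : (fan m n).Coloring (Fin 3) :=
  .mk (fun | inl _ => 0 | inr u => if u.val % 2 = 0 then 1 else 2) <| by
    rintro (i | u) (j | v) h <;> grind [fan_adj_inl_inl, fan_adj_inr_inr]

@[simp] theorem fanColoring_inl (i : Fin m) : fanColoring m n (inl i) = 0 := rfl

@[simp] theorem fanColoring_inr (u : Fin n) :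
    fanColoring m n (inr u) = if u.val % 2 = 0 then 1 else 2 := rfl

def fanTriangle (i : Fin m) (hn : 2 ≤ n) : Fin 3 → Fin m ⊕ Fin n :=
  ![inl i, inr ⟨0, by omega⟩, inr ⟨1, hn⟩]

theorem pairwise_adj_fanTriangle (i : Fin m) (hn : 2 ≤ n) :
    Pairwise fun j k => (fan m n).Adj (fanTriangle i hn j) (fanTriangle i hn k) := by
  intro j k hjk
  fin_cases j <;> fin_cases k <;> simp_all [fanTriangle]

theorem fanColoring_fanTriangle (i : Fin m) (hn : 2 ≤ n) (k : Fin 3) :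
    fanColoring m n (fanTriangle i hn k) = k := by
  fin_cases k <;> rfl

theorem fanColoring_surjective (i : Fin m) (hn : 2 ≤ n) :
    Function.Surjective (fanColoring m n) :=
  fun k => ⟨fanTriangle i hn k, fanColoring_fanTriangle i hn k⟩

theorem eq_fanColoring {i : Fin m} {hn : 2 ≤ n} (C : (fan m n).Coloring (Fin 3))
    (hC : ∀ k, C (fanTriangle i hn k) = k) : C = fanColoring m n := by
  have hapex : C (inl i) = 0 := hC 0
  have hfirst : C (inr ⟨0, by omega⟩) = 1 := hC 1
  have hsecond : C (inr ⟨1, hn⟩) = 2 := hC 2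
  have hpath : ∀ k (hk : k < n), C (inr ⟨k, hk⟩) = if k % 2 = 0 then 1 else 2 := by
    intro k
    induction k with
    | zero => exact fun _ => hfirst
    | succ k ih =>
      intro hk
      have h₁ := C.valid (fan_adj_inl_inr i ⟨k + 1, hk⟩)
      have h₂ := C.valid ((fan_adj_inr_inr ⟨k, by omega⟩ ⟨k + 1, hk⟩).2 (.inl rfl))
      rw [hapex] at h₁
      rw [ih] at h₂
      split_ifs at h₂ ⊢ <;> omega
  ext1 x
  rcases x with j | ⟨k, hk⟩
  · have h₁ := C.valid (fan_adj_inl_inr j ⟨0, by omega⟩)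
    have h₂ := C.valid (fan_adj_inl_inr j ⟨1, hn⟩)
    rw [hfirst] at h₁
    rw [hsecond] at h₂
    simp only [fanColoring_inl]
    omega
  · exact hpath k hk

theorem card_filter_fin_mod_two {r : ℕ} (hr : r < 2) (n : ℕ) :
    #{u : Fin n | u.val % 2 = r} = (n + 1 - r) / 2 := by
  rw [card_filter, Fin.sum_univ_eq_sum_range (fun k => if k % 2 = r then 1 else 0)]
  induction n with
  | zero => rw [sum_range_zero]; omega
  | succ n ih => rw [sum_range_succ, ih]; split_ifs <;> omega

theorem map_card_fanColoring_fibers :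
    univ.val.map (fun k => #{x | fanColoring m n x = k}) = {m, (n + 1) / 2, n / 2} := by
  have h₀ : #{x | fanColoring m n x = 0} = m := by
    rw [card_filter, Fintype.sum_sum_type]
    simp [ite_eq_iff]
  have h₁ : #{x | fanColoring m n x = 1} = (n + 1) / 2 := by
    rw [card_filter, Fintype.sum_sum_type]
    simp [card_filter_fin_mod_two]
  have h₂ : #{x | fanColoring m n x = 2} = n / 2 := by
    rw [card_filter, Fintype.sum_sum_type]
    simp [card_filter_fin_mod_two]
  simp only [Fin.univ_val_map, List.ofFn_succ, List.ofFn_zero, Fin.succ_zero_eq_one,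
    Fin.succ_one_eq_two, h₀, h₁, h₂]
  rfl

theorem IsStablePartition.eq_ofSetoid_ker_fanColoring (i : Fin m) (hn : 2 ≤ n)
    {P : Finpartition (univ : Finset (Fin m ⊕ Fin n))} (hP : IsStablePartition (fan m n) P)
    (h3 : #P.parts = 3) : P = Finpartition.ofSetoid (Setoid.ker (fanColoring m n)) := by
  obtain ⟨C, hCr, hCpart⟩ :=
    hP.exists_coloring (by rw [h3, Fintype.card_fin]) _ (pairwise_adj_fanTriangle i hn)
  rw [eq_fanColoring C hCr] at hCpart
  exact Finpartition.eq_ofSetoid_ker _ hCpart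

end Fan

/-- **Lemma.** For `m ≥ 1` and `n ≥ 2`, the fan graph `F_{m,n}` has exactly one
stable partition into three blocks, and its block sizes are `m`, `⌈n/2⌉` and
`⌊n/2⌋`. -/
theorem fan_unique_stable_tripartition (m n : ℕ) (hm : 1 ≤ m) (hn : 2 ≤ n) :
    (∃! P : Finpartition (Finset.univ : Finset (Fin m ⊕ Fin n)),
        IsStablePartition (fan m n) P ∧ P.parts.card = 3) ∧
    (∀ P : Finpartition (Finset.univ : Finset (Fin m ⊕ Fin n)),
        IsStablePartition (fan m n) P → P.parts.card = 3 →
        typeOf P = {m, (n + 1) / 2, n / 2}) := by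
  set P₀ := Finpartition.ofSetoid (Setoid.ker (fanColoring m n))
  have hP₀ : IsStablePartition (fan m n) P₀ := isStablePartition_ofSetoid_ker _
  have htype : typeOf P₀ = {m, (n + 1) / 2, n / 2} := by
    rw [typeOf_ofSetoid_ker (fanColoring_surjective ⟨0, hm⟩ hn), map_card_fanColoring_fibers]
  have hcard : #P₀.parts = 3 := by
    simpa [typeOf] using congrArg Multiset.card htype
  have hunique : ∀ P, IsStablePartition (fan m n) P → #P.parts = 3 → P = P₀ :=
    fun _ => IsStablePartition.eq_ofSetoid_ker_fanColoring ⟨0, hm⟩ hn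
  exact ⟨⟨P₀, ⟨hP₀, hcard⟩, fun P hP => hunique P hP.1 hP.2⟩,
    fun P hP h3 => hunique P hP h3 ▸ htype⟩
end
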